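/- arXiv:1202.0765 — 2 statements merged into one kernel-verified Lean document; each statement's English description precedes it below -/
import Mathlib

section
/- The matrices m1 = [[-3,5],[-2,3]] and m2 = [[0,√5],[-1/√5,0]] each normalize the subgroup Λ of PSL_2(R) generated by p1 = [[1,0],[1,1]], p2 = [[-1,5],[0,-1]], and p3 = [[-14,25],[-9,16]]. -/
/-
Both `m₁` and `m₂` square to `-1` in `SL₂(ℝ)`, so they are involutions of `PSL₂(ℝ)`, and an
involution normalizes a subgroup as soon as it conjugates each generator into it. In `SL₂(ℝ)`:
`m₁ p₁ m₁⁻¹ = p₃⁻¹`, `m₁ p₂ m₁⁻¹ = p₃ p₂⁻¹ p₁⁻¹`, `m₁ p₃ m₁⁻¹ = p₁⁻¹`, and, up to the sign that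
dies in `PSL₂(ℝ)`, `m₂ p₁ m₂⁻¹ = p₂`, `m₂ p₂ m₂⁻¹ = p₁`, `m₂ p₃ m₂⁻¹ = p₂ p₃⁻¹ p₁`.
-/

open Matrix

abbrev SL2R := Matrix.SpecialLinearGroup (Fin 2) ℝ

/-- `PSL₂(ℝ)`, the quotient of `SL₂(ℝ)` by its center `{±I}`. -/
abbrev PSL2R := SL2R ⧸ Subgroup.center SL2R

noncomputable def p1 : SL2R := ⟨!![1, 0; 1, 1], by norm_num [Matrix.det_fin_two_of]⟩
noncomputable def p2 : SL2R := ⟨!![-1, 5; 0, -1], by norm_num [Matrix.det_fin_two_of]⟩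
noncomputable def p3 : SL2R := ⟨!![-14, 25; -9, 16], by norm_num [Matrix.det_fin_two_of]⟩
noncomputable def m1 : SL2R := ⟨!![-3, 5; -2, 3], by norm_num [Matrix.det_fin_two_of]⟩
noncomputable def m2 : SL2R :=
  ⟨!![0, Real.sqrt 5; -(1 / Real.sqrt 5), 0], by
    have h5 : Real.sqrt 5 ≠ 0 := by positivity
    simp [Matrix.det_fin_two_of, h5]⟩

/-- The subgroup `Λ ≤ PSL₂(ℝ)` generated by (the images of) `p1`, `p2`, `p3`. -/
noncomputable def Lambda : Subgroup PSL2R :=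
  Subgroup.closure {(QuotientGroup.mk p1 : PSL2R), QuotientGroup.mk p2, QuotientGroup.mk p3}

section

variable {G : Type*} [Group G]

theorem Subgroup.mem_normalizer_closure_of_inv_eq_self {s : Set G} {n : G} (hn : n⁻¹ = n)
    (h : ∀ g ∈ s, n * g * n⁻¹ ∈ Subgroup.closure s) :
    n ∈ Subgroup.normalizer (Subgroup.closure s : Set G) := by
  have hnn : n * n = 1 := by rw [← mul_inv_cancel n, hn]
  rw [Subgroup.mem_normalizer_iff_map_conj_eq, MonoidHom.map_closure]
  refine le_antisymm (Subgroup.closure_le _ |>.2 <| Set.image_subset_iff.2 h) ?_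
  rw [Subgroup.closure_le, ← MonoidHom.map_closure]
  exact fun g hg ↦ ⟨_, h g hg, by simp [hn, ← mul_assoc, hnn, mul_assoc _ n n]⟩

theorem QuotientGroup.mk_neg_center [HasDistribNeg G] (g : G) :
    (QuotientGroup.mk (-g) : G ⧸ Subgroup.center G) = QuotientGroup.mk g := by
  have hc : (-1 : G) ∈ Subgroup.center G :=
    Subgroup.mem_center_iff.2 fun x ↦ (Commute.neg_one_left x).eq.symm
  rw [← neg_one_mul, QuotientGroup.mk_mul, (QuotientGroup.eq_one_iff _).2 hc, one_mul]

end

open Matrix.SpecialLinearGroup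

lemma coe_m1 : (m1 : Matrix (Fin 2) (Fin 2) ℝ) = !![-3, 5; -2, 3] := rfl
lemma coe_m2 : (m2 : Matrix (Fin 2) (Fin 2) ℝ) = !![0, √5; -(1 / √5), 0] := rfl
lemma coe_p1 : (p1 : Matrix (Fin 2) (Fin 2) ℝ) = !![1, 0; 1, 1] := rfl
lemma coe_p2 : (p2 : Matrix (Fin 2) (Fin 2) ℝ) = !![-1, 5; 0, -1] := rfl
lemma coe_p3 : (p3 : Matrix (Fin 2) (Fin 2) ℝ) = !![-14, 25; -9, 16] := rfl

lemma m1_inv : m1⁻¹ = -m1 := by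
  ext i j
  simp only [coe_inv, coe_neg, coe_m1, adjugate_fin_two_of]
  fin_cases i <;> fin_cases j <;> simp

lemma m2_inv : m2⁻¹ = -m2 := by
  ext i j
  simp only [coe_inv, coe_neg, coe_m2, adjugate_fin_two_of]
  fin_cases i <;> fin_cases j <;> simp

lemma m1_conj_p1 : m1 * p1 * m1⁻¹ = p3⁻¹ := by
  ext i j
  simp only [coe_mul, coe_inv, coe_m1, coe_p1, coe_p3, adjugate_fin_two_of, mul_fin_two]
  fin_cases i <;> fin_cases j <;> norm_num

lemma m1_conj_p2 : m1 * p2 * m1⁻¹ = p3 * p2⁻¹ * p1⁻¹ := by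
  ext i j
  simp only [coe_mul, coe_inv, coe_m1, coe_p1, coe_p2, coe_p3, adjugate_fin_two_of, mul_fin_two]
  fin_cases i <;> fin_cases j <;> norm_num

lemma m1_conj_p3 : m1 * p3 * m1⁻¹ = p1⁻¹ := by
  ext i j
  simp only [coe_mul, coe_inv, coe_m1, coe_p1, coe_p3, adjugate_fin_two_of, mul_fin_two]
  fin_cases i <;> fin_cases j <;> norm_num

lemma m2_conj_p1 : m2 * p1 * m2⁻¹ = -p2 := by
  ext i j
  simp only [coe_mul, coe_inv, coe_neg, coe_m2, coe_p1, coe_p2, adjugate_fin_two_of, mul_fin_two]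
  fin_cases i <;> fin_cases j <;> simp [field]

lemma m2_conj_p2 : m2 * p2 * m2⁻¹ = -p1 := by
  ext i j
  simp only [coe_mul, coe_inv, coe_neg, coe_m2, coe_p1, coe_p2, adjugate_fin_two_of, mul_fin_two]
  fin_cases i <;> fin_cases j <;> simp [field]

lemma m2_conj_p3 : m2 * p3 * m2⁻¹ = -(p2 * p3⁻¹ * p1) := by
  ext i j
  simp only [coe_mul, coe_inv, coe_neg, coe_m2, coe_p1, coe_p2, coe_p3, adjugate_fin_two_of,
    mul_fin_two]
  fin_cases i <;> fin_cases j <;> simp [field] <;> norm_num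

noncomputable def LambdaSL : Subgroup SL2R := Lambda.comap (QuotientGroup.mk' _)

lemma p1_mem_LambdaSL : p1 ∈ LambdaSL := Subgroup.subset_closure (by simp)
lemma p2_mem_LambdaSL : p2 ∈ LambdaSL := Subgroup.subset_closure (by simp)
lemma p3_mem_LambdaSL : p3 ∈ LambdaSL := Subgroup.subset_closure (by simp)

lemma neg_mem_LambdaSL_iff {g : SL2R} : -g ∈ LambdaSL ↔ g ∈ LambdaSL := by
  simp only [LambdaSL, Subgroup.mem_comap, QuotientGroup.mk'_apply, QuotientGroup.mk_neg_center]

lemma mk_inv_eq_self_of_inv_eq_neg {m : SL2R} (hm : m⁻¹ = -m) :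
    (QuotientGroup.mk m : PSL2R)⁻¹ = QuotientGroup.mk m := by
  rw [← QuotientGroup.mk_inv, hm, QuotientGroup.mk_neg_center]

theorem stmt7 :
    (QuotientGroup.mk m1 : PSL2R) ∈ Subgroup.normalizer (Lambda : Set PSL2R) ∧
    (QuotientGroup.mk m2 : PSL2R) ∈ Subgroup.normalizer (Lambda : Set PSL2R) := by
  have h1 := p1_mem_LambdaSL
  have h2 := p2_mem_LambdaSL
  have h3 := p3_mem_LambdaSL
  constructor
  · refine Subgroup.mem_normalizer_closure_of_inv_eq_self (mk_inv_eq_self_of_inv_eq_neg m1_inv) ?_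
    rintro _ (rfl | rfl | rfl) <;> change m1 * _ * m1⁻¹ ∈ LambdaSL
    · exact m1_conj_p1 ▸ inv_mem h3
    · exact m1_conj_p2 ▸ mul_mem (mul_mem h3 (inv_mem h2)) (inv_mem h1)
    · exact m1_conj_p3 ▸ inv_mem h1
  · refine Subgroup.mem_normalizer_closure_of_inv_eq_self (mk_inv_eq_self_of_inv_eq_neg m2_inv) ?_
    rintro _ (rfl | rfl | rfl) <;> change m2 * _ * m2⁻¹ ∈ LambdaSL
    · rw [m2_conj_p1, neg_mem_LambdaSL_iff]; exact h2
    · rw [m2_conj_p2, neg_mem_LambdaSL_iff]; exact h1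
    · rw [m2_conj_p3, neg_mem_LambdaSL_iff]; exact mul_mem (mul_mem h2 (inv_mem h3)) h1
end

section
/- Suppose z = i(m + n√2) and z' = i(m + n'√2), with m, n, n' rational and m ≠ 0, lie in the same orbit of the Möbius action of PGL_2(Q) on C∪{∞}. Then n' = n or n' = -n. -/
lemma indep2 (p q : ℚ) (h : (p : ℝ) + (q : ℝ) * Real.sqrt 2 = 0) : p = 0 ∧ q = 0 := by
  by_cases hq : q = 0
  · subst hq
    norm_num at h
    exact ⟨by exact_mod_cast h, rfl⟩
  · exfalso
    apply irrational_sqrt_two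
    refine ⟨(-p / q : ℚ), ?_⟩
    have hq' : (q : ℝ) ≠ 0 := by exact_mod_cast hq
    push_cast
    field_simp
    linear_combination -h

theorem stmt12 (m n n' : ℚ) (hm : m ≠ 0)
    (horbit : ∃ a b c d : ℚ, a * d - b * c ≠ 0 ∧
      ((a : ℂ) * (Complex.I * ((m : ℂ) + (n : ℂ) * Real.sqrt 2)) + (b : ℂ)) /
        ((c : ℂ) * (Complex.I * ((m : ℂ) + (n : ℂ) * Real.sqrt 2)) + (d : ℂ)) =
      Complex.I * ((m : ℂ) + (n' : ℂ) * Real.sqrt 2)) :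
    n' = n ∨ n' = -n := by
  obtain ⟨a, b, c, d, hdet, heq⟩ := horbit
  set r : ℝ := Real.sqrt 2 with hr
  have hr2 : r ^ 2 = 2 := Real.sq_sqrt (by norm_num)
  have hs : (m : ℝ) + (n : ℝ) * r ≠ 0 := by
    intro h0
    exact hm (indep2 m n h0).1
  -- denominator nonzero
  have hden : ((c : ℂ) * (Complex.I * ((m : ℂ) + (n : ℂ) * (r : ℝ))) + (d : ℂ)) ≠ 0 := by
    intro h0
    rw [Complex.ext_iff] at h0
    simp [Complex.add_re, Complex.add_im, Complex.mul_re, Complex.mul_im] at h0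
    obtain ⟨h1, h2⟩ := h0
    have hc : c = 0 := by
      rcases h2 with h | h
      · exact h
      · exact absurd h hs
    apply hdet
    rw [hc, h1]; ring
  rw [div_eq_iff hden] at heq
  have hRe := congrArg Complex.re heq
  have hIm := congrArg Complex.im heq
  simp [Complex.add_re, Complex.add_im, Complex.mul_re, Complex.mul_im] at hRe hIm
  -- hRe : b = -(s' * (c * s)) roughly; hIm : a * s = s' * d
  -- Extract rational equations via independence
  have key1 : a * m - d * m = 0 ∧ a * n - d * n' = 0 := by
    apply indep2
    push_cast
    linear_combination hIm
  have key2 : (b + c * (m ^ 2 + 2 * n * n')) = 0 ∧ c * (n + n') * m = 0 := by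
    apply indep2
    push_cast
    linear_combination hRe - (c : ℝ) * n * n' * hr2
  obtain ⟨k1a, k1b⟩ := key1
  obtain ⟨_, k2b⟩ := key2
  rcases mul_eq_zero.1 k2b with h | h
  · rcases mul_eq_zero.1 h with hc | hnn
    · -- c = 0
      left
      have had : a = d := by
        have : (a - d) * m = 0 := by linarith [k1a]
        rcases mul_eq_zero.1 this with h' | h'
        · linarith
        · exact absurd h' hm
      have ha : d ≠ 0 := by
        intro ha
        apply hdet
        rw [hc, ha]; ring
      have : d * (n - n') = 0 := by linear_combination k1b - n * had
      rcases mul_eq_zero.1 this with h' | h'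
      · exact absurd h' ha
      · linarith
    · right; linarith
  · exact absurd h hm
end
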